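/- Consistent Cut Vote Safety implies Consistency for Texel: in a system of 3f+1 processes, if two consistent cuts CC1 and CC2 of an execution support values c1 and c2 respectively (i.e., at least 2f+1 processes support ci after their last experiment in CCi), and any process supporting the value of a supporting consistent cut never subsequently performs a reversing experiment, then c1 = c2. -/

import Mathlib

/-! Two quorums of `2f+1` among `3f+1` processes share a process. By vote safety that process
runs no reversing experiment outside either cut, so it supports the same value on both cuts,
which forces `c₁ = c₂`. -/

open Finset

theorem exists_mem_of_two_quorums {P : Type*} [Fintype P] (f : ℕ)
    (hP : Fintype.card P = 3 * f + 1) {A B : Finset P} (hA : 2 * f + 1 ≤ #A)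
    (hB : 2 * f + 1 ≤ #B) : ∃ π, π ∈ A ∧ π ∈ B := by
  classical
  have hcard : #(univ : Finset P) < #A + #B := by rw [card_univ]; omega
  obtain ⟨π, hπ⟩ := inter_nonempty_of_card_lt_card_add_card (subset_univ A) (subset_univ B) hcard
  exact ⟨π, mem_inter.mp hπ⟩

theorem sup_eq_of_forall_rev_mem {P C X : Type*} {proc : X → P} {rev : X → Prop}
    {IsCut : Set X → Prop} {sup : Set X → P → C}
    (hchange : ∀ (S₁ S₂ : Set X), IsCut S₁ → IsCut S₂ → ∀ π : P, sup S₁ π ≠ sup S₂ π →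
        ∃ x : X, rev x ∧ proc x = π ∧ ((x ∈ S₂ ∧ x ∉ S₁) ∨ (x ∈ S₁ ∧ x ∉ S₂)))
    {S₁ S₂ : Set X} (hS₁ : IsCut S₁) (hS₂ : IsCut S₂) {π : P}
    (hrev : ∀ x, proc x = π → rev x → x ∈ S₁ ∧ x ∈ S₂) : sup S₁ π = sup S₂ π := by
  by_contra hne
  obtain ⟨x, hx, hxπ, ⟨-, hx₁⟩ | ⟨-, hx₂⟩⟩ := hchange S₁ S₂ hS₁ hS₂ π hne
  · exact hx₁ (hrev x hxπ hx).1
  · exact hx₂ (hrev x hxπ hx).2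

theorem stmt_11_general {P C X : Type*} [Fintype P] [DecidableEq C]
    (f : ℕ) (hP : Fintype.card P = 3 * f + 1)
    (proc : X → P) (rev : X → Prop)
    (IsCut : Set X → Prop)
    (sup : Set X → P → C)
    (hsafety : ∀ (S : Set X) (c : C), IsCut S →
        2 * f + 1 ≤ (Finset.univ.filter (fun π => sup S π = c)).card →
        ∀ π : P, sup S π = c → ∀ x : X, proc x = π → rev x → x ∈ S)
    (hchange : ∀ (S₁ S₂ : Set X), IsCut S₁ → IsCut S₂ → ∀ π : P, sup S₁ π ≠ sup S₂ π →
        ∃ x : X, rev x ∧ proc x = π ∧ ((x ∈ S₂ ∧ x ∉ S₁) ∨ (x ∈ S₁ ∧ x ∉ S₂)))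
    (S₁ S₂ : Set X) (hS₁ : IsCut S₁) (hS₂ : IsCut S₂) (c₁ c₂ : C)
    (hsup₁ : 2 * f + 1 ≤ (Finset.univ.filter (fun π => sup S₁ π = c₁)).card)
    (hsup₂ : 2 * f + 1 ≤ (Finset.univ.filter (fun π => sup S₂ π = c₂)).card) :
    c₁ = c₂ := by
  obtain ⟨π, hπ₁, hπ₂⟩ := exists_mem_of_two_quorums f hP hsup₁ hsup₂
  have h₁ : sup S₁ π = c₁ := (mem_filter.mp hπ₁).2
  have h₂ : sup S₂ π = c₂ := (mem_filter.mp hπ₂).2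
  have hsame : sup S₁ π = sup S₂ π :=
    sup_eq_of_forall_rev_mem hchange hS₁ hS₂ fun x hxπ hx =>
      ⟨hsafety S₁ c₁ hS₁ hsup₁ π h₁ x hxπ hx, hsafety S₂ c₂ hS₂ hsup₂ π h₂ x hxπ hx⟩
  rw [← h₁, ← h₂, hsame]

/-- Consistent Cut Vote Safety implies Consistency for Texel.

Processes `P` with `|P| = 3f+1`; experiments `X` run by processes (`proc`), partially
ordered by happened-before `hb`; `rev x` marks reversing experiments; `IsCut` holds of
`hb`-downward-closed sets of reversing experiments; `sup S π` is the value process `π`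
supports after its last experiment in cut `S`; a cut `S` supports `c` if at least `2f+1`
processes support `c` on `S`.  Hypotheses:
* `hsafety` (Consistent Cut Vote Safety): if a cut supports `c`, every reversing experiment
  of a process supporting `c` on that cut already belongs to the cut (i.e. none is run
  subsequently);
* `hchange`: a process whose supported value differs between two cuts must have run a
  reversing experiment lying in one cut but not the other.

Then two supporting consistent cuts support the same value. -/
theorem stmt_11 {P C X : Type*} [Fintype P] [DecidableEq P] [DecidableEq C]
    (f : ℕ) (hf : 0 < f) (hP : Fintype.card P = 3 * f + 1)
    (red blue : C) (hrb : red ≠ blue)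
    (proc : X → P) (hb : X → X → Prop) (rev : X → Prop)
    (IsCut : Set X → Prop)
    (hcut : ∀ S : Set X, IsCut S ↔ ((∀ x ∈ S, rev x) ∧ ∀ x y, rev x → hb x y → y ∈ S → x ∈ S))
    (sup : Set X → P → C)
    (hsafety : ∀ (S : Set X) (c : C), IsCut S →
        2 * f + 1 ≤ (Finset.univ.filter (fun π => sup S π = c)).card →
        ∀ π : P, sup S π = c → ∀ x : X, proc x = π → rev x → x ∈ S)
    (hchange : ∀ (S₁ S₂ : Set X), IsCut S₁ → IsCut S₂ → ∀ π : P, sup S₁ π ≠ sup S₂ π →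
        ∃ x : X, rev x ∧ proc x = π ∧ ((x ∈ S₂ ∧ x ∉ S₁) ∨ (x ∈ S₁ ∧ x ∉ S₂)))
    (S₁ S₂ : Set X) (hS₁ : IsCut S₁) (hS₂ : IsCut S₂) (c₁ c₂ : C)
    (hsup₁ : 2 * f + 1 ≤ (Finset.univ.filter (fun π => sup S₁ π = c₁)).card)
    (hsup₂ : 2 * f + 1 ≤ (Finset.univ.filter (fun π => sup S₂ π = c₂)).card) :
    c₁ = c₂ :=
  stmt_11_general f hP proc rev IsCut sup hsafety hchange S₁ S₂ hS₁ hS₂ c₁ c₂ hsup₁ hsup₂
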